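/- If a switching class on an odd number of vertices contains the graphs Γ (with all degrees even) and σ_X(Γ), then {X, Ω \ X} is exactly the partition of vertices of σ_X(Γ) into those of even and odd degree; in particular the all-even-degree graph in the class is unique and its automorphism group equals the automorphism group of the switching class. -/

import Mathlib

/-! Switching with respect to `X` replaces `N(v)` by its symmetric difference with the side of
`{X, Xᶜ}` not containing `v`. As `|Ω|` is odd, exactly one of `|X|`, `|Xᶜ|` is odd, so when all
degrees of `Γ` are even the odd-degree vertices of `σ_X Γ` form one whole side. Hence `σ_X Γ` has
all degrees even only for `X = ∅` or `X = Ω`, i.e. when `σ_X Γ = Γ`; and a permutation carrying `Γ`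
onto `σ_Y Γ` preserves degrees, so it is an automorphism of `Γ`. -/

/-- Seidel switching of a simple graph `Γ` with respect to a set `X` of vertices:
adjacency between `X` and its complement is complemented, adjacency within `X`
or within the complement is unchanged. -/
def switching {Ω : Type*} (X : Set Ω) (Γ : SimpleGraph Ω) : SimpleGraph Ω where
  Adj u v := ((u ∈ X ↔ v ∈ X) ∧ Γ.Adj u v) ∨ (¬(u ∈ X ↔ v ∈ X) ∧ ¬Γ.Adj u v)
  symm := by
    constructor
    intro u v h
    rcases h with ⟨h1, h2⟩ | ⟨h1, h2⟩
    · exact Or.inl ⟨h1.symm, h2.symm⟩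
    · exact Or.inr ⟨fun h => h1 h.symm, fun h => h2 h.symm⟩
  loopless := by
    constructor
    intro u h
    rcases h with ⟨_, h⟩ | ⟨h, _⟩
    · exact Γ.loopless.irrefl u h
    · exact h Iff.rfl

open scoped symmDiff

theorem Set.ncard_symmDiff_add_two_mul_ncard_inter {α : Type*} (s t : Set α)
    (hs : s.Finite := by toFinite_tac) (ht : t.Finite := by toFinite_tac) :
    (s ∆ t).ncard + 2 * (s ∩ t).ncard = s.ncard + t.ncard := by
  rw [symmDiff_eq_sup_sdiff_inf]
  change ((s ∪ t) \ (s ∩ t)).ncard + _ = _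
  rw [← Set.ncard_union_add_ncard_inter s t hs ht, two_mul, ← add_assoc,
    Set.ncard_sdiff_add_ncard_of_subset (Set.inter_subset_left.trans Set.subset_union_left)
      (hs.union ht)]

theorem Set.even_ncard_symmDiff_iff {α : Type*} (s t : Set α)
    (hs : s.Finite := by toFinite_tac) (ht : t.Finite := by toFinite_tac) :
    Even (s ∆ t).ncard ↔ (Even s.ncard ↔ Even t.ncard) := by
  rw [← Nat.even_add, ← Set.ncard_symmDiff_add_two_mul_ncard_inter s t hs ht, Nat.even_add,
    iff_true_right (even_two_mul _)]

theorem even_ncard_compl_iff {α : Type*} [Finite α] (hodd : Odd (Nat.card α)) (s : Set α) :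
    Even sᶜ.ncard ↔ ¬Even s.ncard := by
  rw [← Set.ncard_add_ncard_compl s, Nat.odd_add'] at hodd
  rw [← Nat.not_odd_iff_even, hodd]

theorem SimpleGraph.Iso.ncard_neighborSet {V W : Type*} {G : SimpleGraph V} {G' : SimpleGraph W}
    (e : G ≃g G') (v : V) : (G'.neighborSet (e v)).ncard = (G.neighborSet v).ncard := by
  rw [← e.image_neighborSet, Set.ncard_image_of_injective _ e.injective]

section switching

variable {Ω : Type*} (X : Set Ω) (Γ : SimpleGraph Ω)

theorem switching_compl : switching Xᶜ Γ = switching X Γ := by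
  ext u v
  simp only [switching, Set.mem_compl_iff, not_iff_not]

theorem switching_empty : switching ∅ Γ = Γ := by
  ext u v
  simp [switching]

theorem switching_univ : switching Set.univ Γ = Γ := by
  rw [← Set.compl_empty, switching_compl, switching_empty]

theorem neighborSet_switching_of_mem {v : Ω} (hv : v ∈ X) :
    (switching X Γ).neighborSet v = Γ.neighborSet v ∆ Xᶜ := by
  ext u
  by_cases hu : u ∈ X <;> simp [switching, Set.mem_symmDiff, hu, hv]

theorem neighborSet_switching_of_notMem {v : Ω} (hv : v ∉ X) :
    (switching X Γ).neighborSet v = Γ.neighborSet v ∆ X := by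
  ext u
  by_cases hu : u ∈ X <;> simp [switching, Set.mem_symmDiff, hu, hv]

variable [Finite Ω]

theorem odd_ncard_neighborSet_switching_iff (hodd : Odd (Nat.card Ω)) {v : Ω}
    (hv : Even (Γ.neighborSet v).ncard) :
    Odd ((switching X Γ).neighborSet v).ncard ↔ (v ∈ X ↔ Even X.ncard) := by
  rw [← Nat.not_even_iff_odd]
  by_cases hvX : v ∈ X
  · rw [neighborSet_switching_of_mem X Γ hvX, Set.even_ncard_symmDiff_iff, iff_true_left hv,
      even_ncard_compl_iff hodd]
    simp [hvX]
  · rw [neighborSet_switching_of_notMem X Γ hvX, Set.even_ncard_symmDiff_iff, iff_true_left hv]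
    simp [hvX]

theorem switching_eq_self_of_forall_even (hodd : Odd (Nat.card Ω))
    (hΓ : ∀ v, Even (Γ.neighborSet v).ncard)
    (h : ∀ v, Even ((switching X Γ).neighborSet v).ncard) :
    switching X Γ = Γ := by
  have hside : ∀ v, ¬(v ∈ X ↔ Even X.ncard) := fun v hv =>
    Nat.not_odd_iff_even.mpr (h v) ((odd_ncard_neighborSet_switching_iff X Γ hodd (hΓ v)).mpr hv)
  by_cases hX : Even X.ncard
  · rw [Set.eq_empty_of_forall_notMem fun v hv => hside v (iff_of_true hv hX), switching_empty]
  · rw [Set.eq_univ_of_forall fun v => not_not.mp fun hv => hside v (iff_of_false hv hX),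
      switching_univ]

end switching

theorem stmt13 {Ω : Type*} [Fintype Ω] (hodd : Odd (Fintype.card Ω))
    (Γ : SimpleGraph Ω) (hΓ : ∀ v : Ω, Even {u : Ω | Γ.Adj v u}.ncard)
    (X : Set Ω) :
    (X = {v : Ω | Odd {u : Ω | (switching X Γ).Adj v u}.ncard} ∨
      X = {v : Ω | Even {u : Ω | (switching X Γ).Adj v u}.ncard}) ∧
    ((∀ v : Ω, Even {u : Ω | (switching X Γ).Adj v u}.ncard) → switching X Γ = Γ) ∧
    ({g : Equiv.Perm Ω | ∀ u v, Γ.Adj (g u) (g v) ↔ Γ.Adj u v} =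
      {g : Equiv.Perm Ω | ∃ Y : Set Ω,
        ∀ u v, (switching Y Γ).Adj (g u) (g v) ↔ Γ.Adj u v}) := by
  rw [← Nat.card_eq_fintype_card] at hodd
  have hparity v : Odd {u | (switching X Γ).Adj v u}.ncard ↔ (v ∈ X ↔ Even X.ncard) :=
    odd_ncard_neighborSet_switching_iff X Γ hodd (hΓ v)
  refine ⟨?_, switching_eq_self_of_forall_even X Γ hodd hΓ, ?_⟩
  · by_cases hX : Even X.ncard
    · exact .inl <| Set.ext fun v => by simpa [hX] using (hparity v).symm
    · refine .inr <| Set.ext fun v => ?_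
      rw [Set.mem_ofPred_eq, ← Nat.not_odd_iff_even, hparity]
      simp [hX]
  · ext g
    refine ⟨fun hg => ⟨∅, by rwa [switching_empty]⟩, fun ⟨Y, hY⟩ => ?_⟩
    let e : Γ ≃g switching Y Γ := ⟨g, hY _ _⟩
    have hY_even v : Even ((switching Y Γ).neighborSet v).ncard := by
      rw [← e.apply_symm_apply v, e.ncard_neighborSet]
      exact hΓ _
    rwa [switching_eq_self_of_forall_even Y Γ hodd hΓ hY_even] at hY
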